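/- For the one-parameter family Ψ⁵_m(z) = (1+pz², pz³+z⁵, mz+nz³, −nz²−mz⁴) with n = 3√((3m²−5)/(m²+9)) and p = nm/3, and for m ≥ √(5/3), the horizontality condition f₁′f₂ − f₁f₂′ + f₃′f₄ − f₃f₄′ = 0 holds identically, and |Ψ⁵_m(z)|² = (1+r²)³·(2pr²cos2φ + r⁴ + (m²−3)r² + 1) in polar coordinates z = r·e^{iφ}. -/

import Mathlib

/-!
Each component of `Ψ⁵_m` has the form `z ^ k * (a + b * z ^ 2)` with `a, b` real, so its squared
modulus is `|z| ^ (2k) * (a² + b² |z|⁴ + 2ab Re z²)`. The sum is therefore a polynomial in `|z|²`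
and `Re z²`, and it factors as claimed as soon as `nm = 3p` and `p² + n² = 3m² − 5`. The same two
relations are exactly what makes the horizontality form vanish; the choice of `n` and `p` is
made to satisfy them.
-/

open Polynomial Complex

noncomputable def psi5 {R : Type*} [CommRing R] (m n p : R) : Fin 4 → R[X] :=
  ![1 + C p * X ^ 2, C p * X ^ 3 + X ^ 5, C m * X + C n * X ^ 3, -(C n * X ^ 2) - C m * X ^ 4]

theorem psi5_horizontal {R : Type*} [CommRing R] {m n p : R} (hnm : n * m = 3 * p)
    (hpn : p ^ 2 + n ^ 2 = 3 * m ^ 2 - 5) :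
    derivative (psi5 m n p 0) * psi5 m n p 1 - psi5 m n p 0 * derivative (psi5 m n p 1) +
      derivative (psi5 m n p 2) * psi5 m n p 3 - psi5 m n p 2 * derivative (psi5 m n p 3) = 0 := by
  have hC1 := congrArg C hnm
  have hC2 := congrArg C hpn
  simp only [map_add, map_sub, map_mul, map_pow, map_ofNat] at hC1 hC2
  simp only [psi5, Matrix.cons_val, derivative_add, derivative_sub, derivative_neg, derivative_one,
    derivative_C_mul, derivative_X_pow, derivative_X, Nat.cast_ofNat, map_ofNat]
  linear_combination (X ^ 2 + X ^ 6) * hC1 - X ^ 4 * hC2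

theorem sq_norm_ofReal_add_ofReal_mul (a b : ℝ) (w : ℂ) :
    ‖(a : ℂ) + b * w‖ ^ 2 = a ^ 2 + b ^ 2 * ‖w‖ ^ 2 + 2 * a * b * w.re := by
  simp only [Complex.sq_norm, normSq_apply, add_re, add_im, mul_re, mul_im, ofReal_re, ofReal_im]
  ring

theorem sq_norm_pow_mul_ofReal_add_ofReal_mul_sq (k : ℕ) (a b : ℝ) (z : ℂ) :
    ‖z ^ k * (a + b * z ^ 2)‖ ^ 2 =
      ‖z‖ ^ (2 * k) * (a ^ 2 + b ^ 2 * ‖z‖ ^ 4 + 2 * a * b * (z ^ 2).re) := by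
  rw [norm_mul, mul_pow, sq_norm_ofReal_add_ofReal_mul, norm_pow, norm_pow]
  ring

theorem sum_sq_norm_eval_psi5 {m n p : ℝ} (hnm : n * m = 3 * p)
    (hpn : p ^ 2 + n ^ 2 = 3 * m ^ 2 - 5) (z : ℂ) :
    ∑ i, ‖(psi5 (m : ℂ) n p i).eval z‖ ^ 2 =
      (1 + ‖z‖ ^ 2) ^ 3 * (2 * p * (z ^ 2).re + ‖z‖ ^ 4 + (m ^ 2 - 3) * ‖z‖ ^ 2 + 1) := by
  have e0 : (psi5 (m : ℂ) n p 0).eval z = z ^ 0 * ((1 : ℝ) + p * z ^ 2) := by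
    simp only [psi5, Matrix.cons_val, eval_add, eval_one, eval_mul, eval_C, eval_pow, eval_X]
    push_cast; ring
  have e1 : (psi5 (m : ℂ) n p 1).eval z = z ^ 3 * (p + (1 : ℝ) * z ^ 2) := by
    simp only [psi5, Matrix.cons_val, eval_add, eval_mul, eval_C, eval_pow, eval_X]
    push_cast; ring
  have e2 : (psi5 (m : ℂ) n p 2).eval z = z ^ 1 * (m + n * z ^ 2) := by
    simp only [psi5, Matrix.cons_val, eval_add, eval_mul, eval_C, eval_pow, eval_X]
    ring
  have e3 : (psi5 (m : ℂ) n p 3).eval z = -(z ^ 2 * (n + m * z ^ 2)) := by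
    simp only [psi5, Matrix.cons_val, eval_sub, eval_neg, eval_mul, eval_C, eval_pow, eval_X]
    ring
  rw [Fin.sum_univ_four, e0, e1, e2, e3, norm_neg]
  simp only [sq_norm_pow_mul_ofReal_add_ofReal_mul_sq]
  linear_combination (2 * ‖z‖ ^ 2 * (1 + ‖z‖ ^ 2) * (z ^ 2).re) * hnm + (‖z‖ ^ 4 + ‖z‖ ^ 6) * hpn

theorem sq_norm_ofReal_mul_exp (r φ : ℝ) : ‖(r : ℂ) * exp (φ * I)‖ ^ 2 = r ^ 2 := by
  rw [norm_mul, norm_exp_ofReal_mul_I, mul_one, norm_real, Real.norm_eq_abs, sq_abs]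

theorem re_sq_ofReal_mul_exp (r φ : ℝ) :
    (((r : ℂ) * exp (φ * I)) ^ 2).re = r ^ 2 * Real.cos (2 * φ) := by
  rw [mul_pow, ← exp_nat_mul, ← ofReal_pow, re_ofReal_mul,
    show ((2 : ℕ) : ℂ) * (φ * I) = ((2 * φ : ℝ) : ℂ) * I by push_cast; ring, exp_ofReal_mul_I_re]

theorem sq_add_sq_of_psi5_params {m n p : ℝ} (hm : 5 ≤ 3 * m ^ 2)
    (hn : n = 3 * Real.sqrt ((3 * m ^ 2 - 5) / (m ^ 2 + 9))) (hp : p = n * m / 3) :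
    p ^ 2 + n ^ 2 = 3 * m ^ 2 - 5 := by
  have hn2 : n ^ 2 = 9 * ((3 * m ^ 2 - 5) / (m ^ 2 + 9)) := by
    rw [hn, mul_pow, Real.sq_sqrt (div_nonneg (sub_nonneg.mpr hm) (by positivity))]; norm_num
  rw [hp, div_pow, mul_pow, hn2]
  field_simp
  ring

/-- For the family `Ψ⁵_m(z) = (1+pz², pz³+z⁵, mz+nz³, −nz²−mz⁴)` with
`n = 3√((3m²−5)/(m²+9))`, `p = nm/3`, `m ≥ √(5/3)`: the horizontality condition holds
identically, and `|Ψ⁵_m(z)|² = (1+r²)³(2pr²cos2φ + r⁴ + (m²−3)r² + 1)` for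
`z = r·e^{iφ}`. -/
theorem Psi5m_horizontal_norm (m n p : ℝ)
    (hm : Real.sqrt (5 / 3) ≤ m)
    (hn : n = 3 * Real.sqrt ((3 * m ^ 2 - 5) / (m ^ 2 + 9)))
    (hp : p = n * m / 3) :
    letI f : Fin 4 → Polynomial ℂ :=
      ![1 + C (p : ℂ) * X ^ 2,
        C (p : ℂ) * X ^ 3 + X ^ 5,
        C (m : ℂ) * X + C (n : ℂ) * X ^ 3,
        -(C (n : ℂ) * X ^ 2) - C (m : ℂ) * X ^ 4]
    (derivative (f 0) * f 1 - f 0 * derivative (f 1) +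
      derivative (f 2) * f 3 - f 2 * derivative (f 3) = 0) ∧
    (∀ r φ : ℝ,
      (∑ i, ‖(f i).eval ((r : ℂ) * Complex.exp (φ * Complex.I))‖ ^ 2) =
        (1 + r ^ 2) ^ 3 *
          (2 * p * r ^ 2 * Real.cos (2 * φ) + r ^ 4 + (m ^ 2 - 3) * r ^ 2 + 1)) := by
  have hnm : n * m = 3 * p := by rw [hp]; ring
  have hpn := sq_add_sq_of_psi5_params (by linarith [(Real.sqrt_le_iff.mp hm).2]) hn hp
  refine ⟨psi5_horizontal (by exact_mod_cast hnm) (by exact_mod_cast hpn),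
    fun r φ => (sum_sq_norm_eval_psi5 hnm hpn _).trans ?_⟩
  have hz := sq_norm_ofReal_mul_exp r φ
  rw [re_sq_ofReal_mul_exp, show ‖(r : ℂ) * exp (φ * I)‖ ^ 4 = (r ^ 2) ^ 2 by rw [← hz]; ring, hz]
  ring
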